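/- Let D be a reduced effective divisor on P¹ over F_q, k ≥ 0 an integer, and 𝒟 ⊆ F_k a D-marking. Then there is a nonnegative integer h with h ≤ (deg D + k)/2 such that there exists a nonzero section s ∈ H⁰(F_k, O(1,h)) vanishing at every point of 𝒟. -/

import Mathlib

/-!
Statement 11.  For every `D`-marking `𝒟` of the Hirzebruch surface `F_k` over `F_q`
there is a nonnegative integer `h ≤ (deg D + k)/2` and a nonzero section of
`O(1, h)` vanishing at every point of `𝒟`.

A `D`-marking is the choice, for each closed point `P ∈ D`, of a relative degree
one point of the fiber `P¹` over `P`; such a point is either `(z : 1)` with `z` in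
the residue field of `P`, or `(1 : 0)`.  We encode a marking as a function
assigning to each closed point `P` an element of `Option (Res P)` (with `none`
standing for `(1 : 0)`); only the values at points of `D` are used.
-/
open scoped Classical

noncomputable section

namespace Stmt11

/-- Closed points of the projective line `P¹` over `F_q`: `none` is the point at
infinity, and `some p` corresponds to the monic irreducible polynomial `p`. -/
abbrev P1Pt (Fq : Type) [Field Fq] : Type :=
  Option {p : Polynomial Fq // p.Monic ∧ Irreducible p}

variable {Fq : Type} [Field Fq]

/-- The degree of a closed point of `P¹`. -/
def P1Pt.deg : P1Pt Fq → ℕ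
  | none => 1
  | some p => p.1.natDegree

/-- The residue field of a closed point of `P¹`. -/
def P1Pt.Res : P1Pt Fq → Type
  | none => Fq
  | some p => AdjoinRoot p.1

instance (P : P1Pt Fq) : CommRing (P1Pt.Res P) :=
  match P with
  | none => inferInstanceAs (CommRing Fq)
  | some p => inferInstanceAs (CommRing (AdjoinRoot p.1))

instance (P : P1Pt Fq) : Algebra Fq (P1Pt.Res P) :=
  match P with
  | none => Algebra.id Fq
  | some p => inferInstanceAs (Algebra Fq (AdjoinRoot p.1))

/-- The homogeneous coordinates `(t₀ : t₁)` of a closed point of `P¹`, in its residue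
field: `(1 : 0)` for the point at infinity, and `(θ : 1)` with `θ` the root of `p`
for the point `some p`. -/
def P1Pt.coords : (P : P1Pt Fq) → Fin 2 → P1Pt.Res P
  | none => ![1, 0]
  | some p => ![AdjoinRoot.root p.1, 1]

/-- Evaluate a polynomial in the homogeneous coordinates `t₀, t₁` of the base `P¹`
at a closed point `P`, in the residue field of `P`. -/
def resEval (P : P1Pt Fq) (A : MvPolynomial (Fin 2) Fq) : P1Pt.Res P :=
  MvPolynomial.aeval (P1Pt.coords P) A

/-- `r_P(s)`: the number of relative degree one points of the fiber of `F_k → P¹`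
over `P` at which the binary cubic form `s = (A₀, A₁, A₂, A₃)` vanishes.  These
points are the `(z : 1)` with `z` in the residue field of `P`, together with `(1 : 0)`. -/
def rP (P : P1Pt Fq) (s : Fin 4 → MvPolynomial (Fin 2) Fq) : ℕ :=
  Nat.card {z : P1Pt.Res P //
      resEval P (s 0) * z ^ 3 + resEval P (s 1) * z ^ 2
        + resEval P (s 2) * z + resEval P (s 3) = 0} +
    (if resEval P (s 0) = 0 then 1 else 0)

/-- The degree of a reduced effective divisor (a finite set of closed points) on `P¹`. -/
def degD (D : Finset (P1Pt Fq)) : ℕ := ∑ P ∈ D, P1Pt.deg P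

/-- `r_D(s) = ∏_{P ∣ D} r_P(s)`. -/
def rD (D : Finset (P1Pt Fq)) (s : Fin 4 → MvPolynomial (Fin 2) Fq) : ℕ :=
  ∏ P ∈ D, rP P s

/-- `a_D(s) = ∏_{P ∣ D} (r_P(s) − 1)`. -/
def aD (D : Finset (P1Pt Fq)) (s : Fin 4 → MvPolynomial (Fin 2) Fq) : ℤ :=
  ∏ P ∈ D, ((rP P s : ℤ) - 1)

/-- `p` is homogeneous of (possibly negative) degree `d`; for `d < 0` this forces
`p = 0`. -/
def IsHomOfDeg (p : MvPolynomial (Fin 2) Fq) (d : ℤ) : Prop :=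
  p.IsHomogeneous d.toNat ∧ (d < 0 → p = 0)

/-- The space of global sections of `O(m, ℓ)` on the Hirzebruch surface `F_k`,
viewed as tuples `(A₀, …, A_m)` of binary forms with `A_i` homogeneous of degree
`ℓ − i·k`. -/
def SecSet (m ℓ k : ℕ) : Set (Fin (m + 1) → MvPolynomial (Fin 2) Fq) :=
  {s | ∀ i : Fin (m + 1), IsHomOfDeg (s i) ((ℓ : ℤ) - (i : ℕ) * k)}

/-- A binary cubic form `s ∈ H⁰(F_k, O(3,ℓ))` is horizontally reducible iff it is
zero or factors as a product of a nonzero quadratic and a nonzero linear form in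
`x, y` with homogeneous polynomial coefficients. -/
def HorizRed (k : ℕ) (s : Fin 4 → MvPolynomial (Fin 2) Fq) : Prop :=
  s = 0 ∨ ∃ (b c : ℤ) (B : Fin 3 → MvPolynomial (Fin 2) Fq)
      (C : Fin 2 → MvPolynomial (Fin 2) Fq),
    B ≠ 0 ∧ C ≠ 0 ∧
    (∀ j : Fin 3, IsHomOfDeg (B j) (b - (j : ℕ) * k)) ∧
    (∀ j : Fin 2, IsHomOfDeg (C j) (c - (j : ℕ) * k)) ∧
    s 0 = B 0 * C 0 ∧ s 1 = B 0 * C 1 + B 1 * C 0 ∧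
    s 2 = B 1 * C 1 + B 2 * C 0 ∧ s 3 = B 2 * C 1

/-- The value (in a fixed trivialization) of a section `(C₀, C₁)` of `O(1, h)` at
the point of the fiber over `P` marked by `pt`: at `(z : 1)` it is `C₀(P)·z + C₁(P)`,
and at `(1 : 0)` it is `C₀(P)`. -/
def evalAt1 (P : P1Pt Fq) (pt : Option (P1Pt.Res P))
    (s : Fin 2 → MvPolynomial (Fin 2) Fq) : P1Pt.Res P :=
  match pt with
  | some z => resEval P (s 0) * z + resEval P (s 1)
  | none => resEval P (s 0)

/-!
Sections of `O(1, h)` are pairs `(A₀, A₁)` of binary forms of degrees `h` and `h - k`; they form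
a vector space of dimension `(h + 1) + max (h + 1 - k) 0`. Vanishing at the marked point over `P`
is one equation in the residue field of `P`, that is `deg P` linear conditions, so `deg D`
conditions in all. For `h = ⌊(deg D + k) / 2⌋` the dimension exceeds `deg D`, so the evaluation
map at the marked points has a nonzero kernel.
-/

instance (P : P1Pt Fq) : Module.Finite Fq (P1Pt.Res P) :=
  match P with
  | none => Module.Finite.self Fq
  | some p => (AdjoinRoot.powerBasis p.2.2.ne_zero).finite

lemma finrank_res (P : P1Pt Fq) : Module.finrank Fq (P1Pt.Res P) = P.deg :=
  match P with
  | none => Module.finrank_self Fq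
  | some _ => finrank_quotient_span_eq_natDegree

def binaryForm (n : ℕ) : (Fin n → Fq) →ₗ[Fq] MvPolynomial (Fin 2) Fq :=
  Fintype.linearCombination Fq fun i : Fin n =>
    MvPolynomial.monomial (Finsupp.single 0 (i : ℕ) + Finsupp.single 1 (n - 1 - i)) 1

lemma binaryForm_injective (n : ℕ) : Function.Injective (binaryForm (Fq := Fq) n) := by
  have hexp : Function.Injective fun i : Fin n =>
      Finsupp.single (0 : Fin 2) (i : ℕ) + Finsupp.single 1 (n - 1 - i) := by
    intro i j hij
    exact Fin.ext (by simpa using DFunLike.congr_fun hij 0)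
  have := ((MvPolynomial.basisMonomials (Fin 2) Fq).linearIndependent.comp _ hexp)
    |>.fintypeLinearCombination_injective
  simpa [binaryForm, Function.comp_def] using this

lemma isHomogeneous_binaryForm (n : ℕ) (c : Fin n → Fq) :
    (binaryForm n c).IsHomogeneous (n - 1) := by
  refine MvPolynomial.IsHomogeneous.sum _ _ _ fun i _ => ?_
  rw [MvPolynomial.smul_monomial]
  refine MvPolynomial.isHomogeneous_monomial _ ?_
  simp only [map_add, Finsupp.degree_single]
  omega

lemma isHomOfDeg_binaryForm {n : ℕ} {d : ℤ} (hn : n = (d + 1).toNat) (c : Fin n → Fq) :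
    IsHomOfDeg (binaryForm n c) d := by
  refine ⟨?_, fun hd => ?_⟩
  · convert isHomogeneous_binaryForm n c using 1
    omega
  · obtain rfl : n = 0 := by omega
    simp [binaryForm, Fintype.linearCombination_apply]

def sectionOfCoeffs (n m : ℕ) :
    (Fin n → Fq) × (Fin m → Fq) →ₗ[Fq] Fin 2 → MvPolynomial (Fin 2) Fq :=
  LinearMap.pi ![binaryForm n ∘ₗ LinearMap.fst Fq _ _, binaryForm m ∘ₗ LinearMap.snd Fq _ _]

lemma sectionOfCoeffs_injective (n m : ℕ) :
    Function.Injective (sectionOfCoeffs (Fq := Fq) n m) := by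
  intro c c' hcc'
  exact Prod.ext (binaryForm_injective n (congrFun hcc' 0))
    (binaryForm_injective m (congrFun hcc' 1))

lemma sectionOfCoeffs_mem_secSet (h k : ℕ) (c : (Fin (h + 1) → Fq) × (Fin (h + 1 - k) → Fq)) :
    sectionOfCoeffs (h + 1) (h + 1 - k) c ∈ SecSet 1 h k := by
  intro i
  fin_cases i
  · exact isHomOfDeg_binaryForm (by simp) c.1
  · exact isHomOfDeg_binaryForm (by simp; omega) c.2

def evalAt1ₗ (P : P1Pt Fq) (pt : Option (P1Pt.Res P)) :
    (Fin 2 → MvPolynomial (Fin 2) Fq) →ₗ[Fq] P1Pt.Res P where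
  toFun := evalAt1 P pt
  map_add' s t := by
    cases pt <;> simp only [evalAt1, resEval, Pi.add_apply, map_add]
    ring
  map_smul' a s := by
    cases pt <;> simp only [evalAt1, resEval, Pi.smul_apply, map_smul, RingHom.id_apply,
      smul_add, smul_mul_assoc]

lemma finrank_pi_res (D : Finset (P1Pt Fq)) :
    Module.finrank Fq (∀ P : D, P1Pt.Res P.1) = degD D := by
  rw [Module.finrank_pi_fintype, degD, ← Finset.sum_coe_sort D]
  simp only [finrank_res]

theorem statement_11_general (Fq : Type) [Field Fq] (k : ℕ)
    (D : Finset (P1Pt Fq)) (pt : (P : P1Pt Fq) → Option (P1Pt.Res P)) :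
    ∃ h : ℕ, 2 * h ≤ degD D + k ∧
      ∃ s ∈ SecSet 1 h k, s ≠ (0 : Fin 2 → MvPolynomial (Fin 2) Fq) ∧
        ∀ P ∈ D, evalAt1 P (pt P) s = 0 := by
  set h := (degD D + k) / 2
  refine ⟨h, by omega, ?_⟩
  let Φ := (LinearMap.pi fun P : D => evalAt1ₗ P.1 (pt P.1)) ∘ₗ
    sectionOfCoeffs (h + 1) (h + 1 - k)
  have hdim : Module.finrank Fq (∀ P : D, P1Pt.Res P.1) <
      Module.finrank Fq ((Fin (h + 1) → Fq) × (Fin (h + 1 - k) → Fq)) := by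
    rw [finrank_pi_res, Module.finrank_prod, Module.finrank_fin_fun, Module.finrank_fin_fun]
    omega
  obtain ⟨c, hc, hc0⟩ :=
    (Submodule.ne_bot_iff _).mp (LinearMap.ker_ne_bot_of_finrank_lt (f := Φ) hdim)
  exact ⟨_, sectionOfCoeffs_mem_secSet h k c,
    (map_ne_zero_iff _ (sectionOfCoeffs_injective _ _)).mpr hc0,
    fun P hP => congrFun hc ⟨P, hP⟩⟩

/-- Let `D` be a reduced effective divisor on `P¹`, `k ≥ 0`, and
`𝒟 ⊆ F_k` a `D`-marking.  Then there is `h ≥ 0` with `h ≤ (deg D + k)/2` and a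
nonzero section `s ∈ H⁰(F_k, O(1,h))` vanishing at every point of `𝒟`. -/
theorem statement_11 (Fq : Type) [Field Fq] [Fintype Fq] (k : ℕ)
    (D : Finset (P1Pt Fq)) (pt : (P : P1Pt Fq) → Option (P1Pt.Res P)) :
    ∃ h : ℕ, 2 * h ≤ degD D + k ∧
      ∃ s ∈ SecSet 1 h k, s ≠ (0 : Fin 2 → MvPolynomial (Fin 2) Fq) ∧
        ∀ P ∈ D, evalAt1 P (pt P) s = 0 :=
  statement_11_general Fq k D pt

end Stmt11
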